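/- (Theorem 1) For the star-graph quantum walk with M ≥ 2 edges started in the diagonal initial state, let λ_M = arccos((M−1)/M) and let t_M = ⌊π/(2·λ_M)⌋ be the integer hitting time. Then the probability of measuring the marked edge at time t_M, namely p_{t_M} = |ψ⁺ 0 (t_M)|² + |ψ⁻ 0 (t_M)|², tends to 1 as M → ∞, and t_M/√M → π/(2√2); i.e., the walk finds the marked edge with probability 1 − o(1) after O(√M) steps. -/

import Mathlib

open Filter

/-!
Star-graph quantum walk with `M` edges (edges indexed by `0, …, M−1`; edge `0` is marked).
The walker's state is a pair of amplitude vectors `ψ⁺ ψ⁻` (indexed by the edges); one step is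
`U = S ∘ C ∘ O` where the oracle `O` maps `(ψ⁺ 0, ψ⁻ 0)` to `(−ψ⁻ 0, −ψ⁺ 0)` and fixes the
other entries, the coin `C` swaps `ψ⁺ i` and `ψ⁻ i` for every `i`, and the scattering `S`
replaces `ψ⁺` by `D_M ψ⁺` with `D_M = (2/M) J_M − I_M`, fixing `ψ⁻`.
-/

/-- One step `U = S ∘ C ∘ O` of the star-graph quantum walk with `M` edges
(amplitudes indexed by `ℕ`; only the indices `< M` are relevant). -/
noncomputable def starStep (M : ℕ) (ψ : (ℕ → ℂ) × (ℕ → ℂ)) : (ℕ → ℂ) × (ℕ → ℂ) :=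
  -- oracle
  let Op : ℕ → ℂ := Function.update ψ.1 0 (-ψ.2 0)
  let Om : ℕ → ℂ := Function.update ψ.2 0 (-ψ.1 0)
  -- coin swaps the two components, then scattering applies `D_M` to the `+` component
  (fun i => ∑ j ∈ Finset.range M, ((2 / (M : ℂ)) - if i = j then 1 else 0) * Om j, Op)

/-- The diagonal initial state `ψ⁺ i = ψ⁻ i = 1/√(2M)`. -/
noncomputable def starInit (M : ℕ) : (ℕ → ℂ) × (ℕ → ℂ) :=
  (fun _ => ((1 / Real.sqrt (2 * M) : ℝ) : ℂ), fun _ => ((1 / Real.sqrt (2 * M) : ℝ) : ℂ))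

/-- The success probability at time `t`: `p_t = |ψ⁺ 0 (t)|² + |ψ⁻ 0 (t)|²`. -/
noncomputable def starProb (M t : ℕ) : ℝ :=
  ‖((starStep M)^[t] (starInit M)).1 0‖ ^ 2 +
    ‖((starStep M)^[t] (starInit M)).2 0‖ ^ 2

/-- `λ_M = arccos((M−1)/M)`. -/
noncomputable def starLam (M : ℕ) : ℝ :=
  Real.arccos (((M : ℝ) - 1) / M)

/-- The integer hitting time `t_M = ⌊π/(2 λ_M)⌋`. -/
noncomputable def starHit (M : ℕ) : ℕ :=
  ⌊Real.pi / (2 * starLam M)⌋₊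

/-!
The walk never leaves the states in which all unmarked edges carry the same pair of amplitudes,
so it reduces to a linear recurrence in four real numbers whose coefficients depend on `M` only
through `c = cos λ_M = (M - 1)/M`. The recurrence has eigenvalues `e^{±iλ}` and `-1`, and solving
it gives `ψ⁻ 0 (t) = ±sin (λ/2)` and `ψ⁺ 0 (t) = sin (λ/2) · A_λ(t)` with
`A_λ = starMarkedAmp λ`, where
`sin (λ/2) · A_λ(t) = c / cos (λ/2) · sin (λ t) + O(sin (λ/2))`.
At `t = t_M` we have `λ t → π/2`, and `λ_M → 0`, so `p_{t_M} → 1`; and since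
`sin (λ_M/2) = 1/√(2M)`, `t_M ≈ π/(2λ_M) ≈ π/(4 sin (λ_M/2)) = π √M/(2√2)`.
-/

open Real Topology

lemma Finset.sum_range_ite_zero {R : Type*} [Ring R] {M : ℕ} (hM : 0 < M) (x y : R) :
    ∑ j ∈ Finset.range M, (if j = 0 then x else y) = x + (M - 1) * y := by
  obtain ⟨n, rfl⟩ := Nat.exists_eq_add_of_lt hM
  simp [Finset.sum_range_succ', add_comm]

/-- The amplitudes are indexed by `ℕ`, and the scattering step writes nonzero values at indices
`≥ M`, so symmetry is only asserted below `M`. -/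
def StarSymmetric (M : ℕ) (ψ : (ℕ → ℂ) × (ℕ → ℂ)) (a b c d : ℝ) : Prop :=
  ∀ i < M, ψ.1 i = ((if i = 0 then a else b : ℝ) : ℂ) ∧ ψ.2 i = ((if i = 0 then c else d : ℝ) : ℂ)

lemma starStep_fst_of_lt {M i : ℕ} (ψ : (ℕ → ℂ) × (ℕ → ℂ)) (hi : i < M) :
    (starStep M ψ).1 i = 2 / M * ∑ j ∈ Finset.range M, Function.update ψ.2 0 (-ψ.1 0) j -
      Function.update ψ.2 0 (-ψ.1 0) i := by
  simp [starStep, sub_mul, Finset.sum_sub_distrib, Finset.mul_sum, hi]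

lemma StarSymmetric.step {M : ℕ} {ψ : (ℕ → ℂ) × (ℕ → ℂ)} {a b c d : ℝ}
    (hM : 0 < M) (h : StarSymmetric M ψ a b c d) :
    StarSymmetric M (starStep M ψ) (a + 2 / M * ((M - 1) * d - a))
      (2 / M * ((M - 1) * d - a) - d) (-c) b := by
  have hO : ∀ j < M, Function.update ψ.2 0 (-ψ.1 0) j = ((if j = 0 then -a else d : ℝ) : ℂ) := by
    intro j hj
    rcases eq_or_ne j 0 with rfl | hj0
    · simp [(h 0 hM).1]
    · simp [hj0, (h j hj).2]
  intro i hi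
  constructor
  · rw [starStep_fst_of_lt ψ hi, hO i hi,
      Finset.sum_congr rfl (fun j hj => hO j (Finset.mem_range.mp hj))]
    simp only [apply_ite (fun x : ℝ => (x : ℂ)), Finset.sum_range_ite_zero hM]
    split_ifs <;> push_cast <;> ring
  · rcases eq_or_ne i 0 with rfl | hi0
    · simp [starStep, (h 0 hM).2]
    · simp [starStep, hi0, (h i hi).1]

noncomputable def starMarkedAmp (θ : ℝ) (t : ℕ) : ℝ :=
  (2 * cos θ * cos (θ * t) + (1 - cos θ) * (-1) ^ t) / (1 + cos θ) +
    2 * cos θ * sin (θ * t) / sin θ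

noncomputable def starUnmarkedAmp (θ : ℝ) (t : ℕ) : ℝ :=
  (2 * cos (θ * t) - (1 - cos θ) * (-1) ^ t) / (1 + cos θ)

section closedForm

variable {θ : ℝ}

lemma starMarkedAmp_zero (hcos : 1 + cos θ ≠ 0) : starMarkedAmp θ 0 = 1 := by
  rw [starMarkedAmp, Nat.cast_zero, mul_zero, cos_zero, sin_zero, pow_zero, mul_zero, zero_div,
    add_zero, div_eq_one_iff_eq hcos]
  ring

lemma starUnmarkedAmp_zero (hcos : 1 + cos θ ≠ 0) : starUnmarkedAmp θ 0 = 1 := by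
  rw [starUnmarkedAmp, Nat.cast_zero, mul_zero, cos_zero, pow_zero, div_eq_one_iff_eq hcos]
  ring

lemma starUnmarkedAmp_one (hcos : 1 + cos θ ≠ 0) : starUnmarkedAmp θ 1 = 1 := by
  rw [starUnmarkedAmp, Nat.cast_one, mul_one, pow_one, div_eq_one_iff_eq hcos]
  ring

lemma starMarkedAmp_succ (hsin : sin θ ≠ 0) (hcos : 1 + cos θ ≠ 0) (t : ℕ) :
    starMarkedAmp θ (t + 1) = starMarkedAmp θ t +
      2 * (cos θ * starUnmarkedAmp θ t - (1 - cos θ) * starMarkedAmp θ t) := by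
  simp only [starMarkedAmp, starUnmarkedAmp, Nat.cast_succ, mul_add_one, cos_add, sin_add,
    pow_succ]
  field_simp
  linear_combination (-2 * cos θ * sin (θ * t)) * sin_sq_add_cos_sq θ

lemma starUnmarkedAmp_add_two (hsin : sin θ ≠ 0) (hcos : 1 + cos θ ≠ 0) (t : ℕ) :
    starUnmarkedAmp θ (t + 2) =
      2 * (cos θ * starUnmarkedAmp θ t - (1 - cos θ) * starMarkedAmp θ t) -
        starUnmarkedAmp θ t := by
  simp only [starMarkedAmp, starUnmarkedAmp, Nat.cast_add, Nat.cast_ofNat, mul_add, mul_two,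
    cos_add, sin_add, pow_add]
  field_simp
  linear_combination (-2 * sin θ * cos (θ * t) - 4 * cos θ * sin (θ * t)) * sin_sq_add_cos_sq θ

lemma abs_starMarkedAmp_sub_le (hcos : 0 ≤ cos θ) (t : ℕ) :
    |starMarkedAmp θ t - 2 * cos θ * sin (θ * t) / sin θ| ≤ 1 := by
  have hc1 := cos_le_one θ
  have hcx := abs_cos_le_one (θ * t)
  rw [starMarkedAmp, add_sub_cancel_right, abs_div, abs_of_pos (a := 1 + cos θ) (by linarith),
    div_le_one (by linarith)]
  calc |2 * cos θ * cos (θ * t) + (1 - cos θ) * (-1) ^ t|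
      ≤ 2 * cos θ * |cos (θ * t)| + (1 - cos θ) := by
        refine (abs_add_le _ _).trans ?_
        simp only [abs_mul, abs_pow, abs_neg, abs_one, one_pow, mul_one, abs_two,
          abs_of_nonneg hcos, abs_of_nonneg (sub_nonneg.2 hc1), le_refl]
    _ ≤ 1 + cos θ := by nlinarith

lemma sin_half_mul_two_mul_div_sin (hsin : sin θ ≠ 0) (x : ℝ) :
    sin (θ / 2) * (2 * x / sin θ) = x / cos (θ / 2) := by
  have hdouble : sin θ = 2 * sin (θ / 2) * cos (θ / 2) := by
    rw [← sin_two_mul, mul_div_cancel₀ _ two_ne_zero]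
  rw [hdouble] at hsin ⊢
  have hs : sin (θ / 2) ≠ 0 := fun h => hsin (by rw [h]; ring)
  have hc : cos (θ / 2) ≠ 0 := fun h => hsin (by rw [h]; ring)
  field_simp

end closedForm

lemma tendsto_sin_half_mul_starMarkedAmp {ι : Type*} {l : Filter ι} {θ : ι → ℝ} {t : ι → ℕ}
    (hθ : Tendsto θ l (𝓝[>] 0)) (hθt : Tendsto (fun i => θ i * t i) l (𝓝 (π / 2))) :
    Tendsto (fun i => sin (θ i / 2) * starMarkedAmp (θ i) (t i)) l (𝓝 1) := by
  have hθ₀ : Tendsto θ l (𝓝 0) := (tendsto_nhdsWithin_iff.mp hθ).1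
  have hθ₂ : Tendsto (fun i => θ i / 2) l (𝓝 0) := by simpa using hθ₀.div_const 2
  have hsmall : ∀ᶠ i in l, θ i ∈ Set.Ioo 0 (π / 2) := hθ (Ioo_mem_nhdsGT (by positivity))
  have hhalf : Tendsto (fun i => sin (θ i / 2)) l (𝓝 0) := by
    simpa [Function.comp_def] using (continuous_sin.tendsto 0).comp hθ₂
  have hosc : Tendsto (fun i => sin (θ i / 2) *
      (starMarkedAmp (θ i) (t i) - 2 * cos (θ i) * sin (θ i * t i) / sin (θ i))) l (𝓝 0) := by
    refine squeeze_zero_norm' ?_ (by simpa using hhalf.norm)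
    filter_upwards [hsmall] with i hi
    rw [norm_mul]
    exact mul_le_of_le_one_right (norm_nonneg _)
      (abs_starMarkedAmp_sub_le (cos_nonneg_of_mem_Icc ⟨by linarith [hi.1, pi_pos], hi.2.le⟩) _)
  have hmain : Tendsto (fun i => cos (θ i) / cos (θ i / 2) * sin (θ i * t i)) l (𝓝 1) := by
    have hc := (continuous_cos.tendsto 0).comp hθ₀
    have hc₂ := (continuous_cos.tendsto 0).comp hθ₂
    have hs := (continuous_sin.tendsto (π / 2)).comp hθt
    simpa using (hc.div hc₂ (by simp)).mul hs
  have hsum := hosc.add hmain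
  rw [zero_add] at hsum
  refine hsum.congr' ?_
  filter_upwards [hsmall] with i hi
  have hsin : sin (θ i) ≠ 0 := (sin_pos_of_pos_of_lt_pi hi.1 (by linarith [hi.2, pi_pos])).ne'
  rw [mul_sub, mul_assoc 2, sin_half_mul_two_mul_div_sin hsin]
  ring

lemma tendsto_mul_natFloor_div {ι : Type*} {l : Filter ι} {θ : ι → ℝ} {a : ℝ} (ha : 0 ≤ a)
    (hθ : Tendsto θ l (𝓝[>] 0)) : Tendsto (fun i => θ i * ⌊a / θ i⌋₊) l (𝓝 a) := by
  refine ((tendsto_nat_floor_mul_div_atTop ha).comp (tendsto_inv_nhdsGT_zero.comp hθ)).congr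
    fun i => ?_
  simp [div_eq_mul_inv, mul_comm]

section starLam

variable {M : ℕ}

lemma cos_starLam (hM : 0 < M) : cos (starLam M) = ((M : ℝ) - 1) / M := by
  have hM' : (1 : ℝ) ≤ M := by exact_mod_cast hM
  apply cos_arccos
  · rw [le_div_iff₀ (by positivity)]; linarith
  · rw [div_le_one (by positivity)]; linarith

lemma starLam_pos (hM : 0 < M) : 0 < starLam M := by
  rw [starLam, arccos_pos, div_lt_one (by positivity)]
  linarith

lemma starLam_le_pi_div_two (hM : 0 < M) : starLam M ≤ π / 2 := by
  have hM' : (1 : ℝ) ≤ M := by exact_mod_cast hM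
  rw [starLam, arccos_le_pi_div_two]
  exact div_nonneg (by linarith) (by positivity)

lemma sin_starLam_ne_zero (hM : 0 < M) : sin (starLam M) ≠ 0 :=
  (sin_pos_of_pos_of_lt_pi (starLam_pos hM) (by linarith [starLam_le_pi_div_two hM, pi_pos])).ne'

lemma one_add_cos_starLam_ne_zero (hM : 0 < M) : 1 + cos (starLam M) ≠ 0 := by
  have := cos_nonneg_of_mem_Icc ⟨by linarith [starLam_pos hM, pi_pos], starLam_le_pi_div_two hM⟩
  positivity

lemma sin_half_starLam (hM : 0 < M) : sin (starLam M / 2) = 1 / √(2 * M) := by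
  rw [sin_half_eq_sqrt (starLam_pos hM).le (by linarith [starLam_le_pi_div_two hM, pi_pos]),
    cos_starLam hM, one_div, ← sqrt_inv]
  congr 1
  field_simp
  ring

lemma tendsto_starLam : Tendsto starLam atTop (𝓝[>] 0) := by
  have h : Tendsto (fun M : ℕ => ((M : ℝ) - 1) / M) atTop (𝓝 1) := by
    have := tendsto_const_nhds (x := (1 : ℝ)).sub (tendsto_one_div_atTop_nhds_zero_nat (𝕜 := ℝ))
    rw [sub_zero] at this
    refine this.congr' ?_
    filter_upwards [eventually_gt_atTop 0] with M hM
    field_simp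
  refine tendsto_nhdsWithin_iff.mpr ⟨?_, ?_⟩
  · exact arccos_one ▸ (continuous_arccos.tendsto 1).comp h
  · filter_upwards [eventually_gt_atTop 0] with M hM using starLam_pos hM

lemma tendsto_starLam_div_two : Tendsto (fun M => starLam M / 2) atTop (𝓝 0) := by
  simpa using (tendsto_nhdsWithin_iff.mp tendsto_starLam).1.div_const 2

lemma tendsto_starLam_mul_starHit :
    Tendsto (fun M => starLam M * starHit M) atTop (𝓝 (π / 2)) := by
  refine (tendsto_mul_natFloor_div (by positivity) tendsto_starLam).congr fun M => ?_
  rw [starHit, div_div]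

lemma starStep_iterate_starInit (hM : 0 < M) (t : ℕ) :
    StarSymmetric M ((starStep M)^[t] (starInit M))
      (1 / √(2 * M) * starMarkedAmp (starLam M) t)
      (1 / √(2 * M) * starUnmarkedAmp (starLam M) (t + 1))
      ((-1) ^ t * (1 / √(2 * M)))
      (1 / √(2 * M) * starUnmarkedAmp (starLam M) t) := by
  have hsin := sin_starLam_ne_zero hM
  have hcos := one_add_cos_starLam_ne_zero hM
  induction t with
  | zero =>
    intro i _
    simp [starInit, starMarkedAmp_zero hcos, starUnmarkedAmp_zero hcos, starUnmarkedAmp_one hcos]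
  | succ t ih =>
    rw [Function.iterate_succ_apply', starMarkedAmp_succ hsin hcos,
      starUnmarkedAmp_add_two hsin hcos, cos_starLam hM]
    convert ih.step hM using 2
    · field_simp
      ring
    · field_simp
      ring
    · ring

lemma starProb_eq (hM : 0 < M) (t : ℕ) :
    starProb M t = (sin (starLam M / 2) * starMarkedAmp (starLam M) t) ^ 2 +
      sin (starLam M / 2) ^ 2 := by
  obtain ⟨h₁, h₂⟩ := starStep_iterate_starInit hM t 0 hM
  rw [starProb, h₁, h₂, sin_half_starLam hM]
  simp only [if_true, Complex.norm_real, Real.norm_eq_abs, sq_abs, mul_pow, pow_right_comm _ t 2,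
    neg_one_sq, one_pow, one_mul]

end starLam

lemma tendsto_starProb_starHit : Tendsto (fun M => starProb M (starHit M)) atTop (𝓝 1) := by
  have hamp := tendsto_sin_half_mul_starMarkedAmp tendsto_starLam tendsto_starLam_mul_starHit
  have hhalf : Tendsto (fun M => sin (starLam M / 2)) atTop (𝓝 0) := by
    simpa [Function.comp_def] using (continuous_sin.tendsto 0).comp tendsto_starLam_div_two
  have hsum := (hamp.pow 2).add (hhalf.pow 2)
  norm_num at hsum
  refine hsum.congr' ?_
  filter_upwards [eventually_gt_atTop 0] with M hM using (starProb_eq hM _).symm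

lemma tendsto_starHit_div_sqrt :
    Tendsto (fun M => (starHit M : ℝ) / √M) atTop (𝓝 (π / (2 * √2))) := by
  have hsinc : Tendsto (fun M => sinc (starLam M / 2)) atTop (𝓝 1) := by
    simpa [sinc_zero, Function.comp_def] using
      (continuous_sinc.tendsto 0).comp tendsto_starLam_div_two
  have hlim : √2 / 2 * (1 * (π / 2)) = π / (2 * √2) := by
    field_simp
    exact sq_sqrt zero_le_two
  have hprod := (hsinc.mul tendsto_starLam_mul_starHit).const_mul (√2 / 2)
  rw [hlim] at hprod
  refine hprod.congr' ?_
  filter_upwards [eventually_gt_atTop 0] with M hM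
  have hlam := (starLam_pos hM).ne'
  rw [sinc_of_ne_zero (by positivity), sin_half_starLam hM, sqrt_mul zero_le_two]
  field_simp

/-- (Theorem 1) The star-graph quantum walk started in the diagonal state finds the marked
edge with probability `1 − o(1)` after `O(√M)` steps: the probability `p_{t_M}` of measuring
the marked edge at the hitting time `t_M = ⌊π/(2 λ_M)⌋` tends to `1` as `M → ∞`, and
`t_M/√M → π/(2√2)`. -/
theorem starWalk_search_succeeds :
    Tendsto (fun M : ℕ => starProb M (starHit M)) atTop (nhds 1) ∧
      Tendsto (fun M : ℕ => (starHit M : ℝ) / Real.sqrt M) atTop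
        (nhds (Real.pi / (2 * Real.sqrt 2))) :=
  ⟨tendsto_starProb_starHit, tendsto_starHit_div_sqrt⟩
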